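/- arXiv:2009.09989 — 8 statements merged into one kernel-verified Lean document; each statement's English description precedes it below -/
import Mathlib

section
/- Let G be a simple graph and u a pendant vertex (vertex of degree 1) of G. Then there exists a minimum-weight Italian dominating function f of G with f(u) ≠ 2. -/
open SimpleGraph Finset
open scoped Classical

/-- An Italian dominating function: values in {0,1,2}, and every vertex with
value 0 has neighbor values summing to at least 2. -/
def IsItalian {V : Type*} [Fintype V] (G : SimpleGraph V) (f : V → ℕ) : Prop :=
  (∀ v, f v ≤ 2) ∧
    ∀ v, f v = 0 → 2 ≤ ∑ u ∈ Finset.univ.filter (fun w => G.Adj v w), f u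

/-- The Italian domination number: minimum weight of an Italian dominating function. -/
noncomputable def italianDomNumber {V : Type*} [Fintype V] (G : SimpleGraph V) : ℕ :=
  sInf {w | ∃ f : V → ℕ, IsItalian G f ∧ ∑ v, f v = w}

/-- The corona `G ⊙ K₁`: attach one pendant vertex (an `inr` copy) to each vertex of `G`. -/
def coronaK1 {V : Type*} (G : SimpleGraph V) : SimpleGraph (V ⊕ V) :=
  SimpleGraph.fromRel (fun a b =>
    match a, b with
    | Sum.inl u, Sum.inl v => G.Adj u v
    | Sum.inl u, Sum.inr v => u = v
    | Sum.inr u, Sum.inl v => u = v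
    | Sum.inr _, Sum.inr _ => False)

/-- The corona `G ⊙ H`: one copy of `H` per vertex of `G`, each joined to that vertex. -/
def corona {V W : Type*} (G : SimpleGraph V) (H : SimpleGraph W) :
    SimpleGraph (V ⊕ V × W) :=
  SimpleGraph.fromRel (fun a b =>
    match a, b with
    | Sum.inl u, Sum.inl v => G.Adj u v
    | Sum.inl u, Sum.inr p => u = p.1
    | Sum.inr p, Sum.inl v => p.1 = v
    | Sum.inr p, Sum.inr q => p.1 = q.1 ∧ H.Adj p.2 q.2)

/-
Replacing the value 2 at a pendant vertex `u` by 0, and putting 2 on its unique neighbour `w`,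
keeps the function Italian: `u` is now dominated by `w` alone, and every other vertex of value 0
is not adjacent to `u`, while its neighbours have only gained weight. The weight does not grow,
so a minimum Italian dominating function with `f u = 2` yields one with `f u = 0`.
-/

theorem Finset.sum_update_add_self {ι M : Type*} [Fintype ι] [DecidableEq ι] [AddCommMonoid M]
    (f : ι → M) (i : ι) (b : M) :
    ∑ x, Function.update f i b x + f i = ∑ x, f x + b := by
  rw [sum_update_of_mem (mem_univ i), sum_eq_add_sum_sdiff_singleton_of_mem (mem_univ i) f]
  ac_rfl

section Italian

variable {V : Type*} [Fintype V] {G : SimpleGraph V}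

theorem isItalian_const_two : IsItalian G (fun _ => 2) :=
  ⟨fun _ => le_rfl, fun _ h => absurd h two_ne_zero⟩

theorem italianDomNumber_le_sum {f : V → ℕ} (hf : IsItalian G f) :
    italianDomNumber G ≤ ∑ v, f v :=
  Nat.sInf_le ⟨f, hf, rfl⟩

theorem exists_isItalian_sum_eq_italianDomNumber :
    ∃ f : V → ℕ, IsItalian G f ∧ ∑ v, f v = italianDomNumber G :=
  Nat.sInf_mem (s := {w | ∃ f : V → ℕ, IsItalian G f ∧ ∑ v, f v = w})
    ⟨_, _, isItalian_const_two, rfl⟩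

theorem IsItalian.update_pendant {f : V → ℕ} (hf : IsItalian G f) {u w : V}
    (hw : ∀ v, G.Adj u v ↔ v = w) :
    IsItalian G (Function.update (Function.update f u 0) w 2) := by
  set g := Function.update (Function.update f u 0) w 2
  have huw : u ≠ w := G.ne_of_adj ((hw w).2 rfl)
  have hgw : g w = 2 := Function.update_self ..
  have hg_of_ne : ∀ x, x ≠ w → x ≠ u → g x = f x := fun x hxw hxu => by
    simp only [g, Function.update_of_ne hxw, Function.update_of_ne hxu]
  refine ⟨fun v => ?_, fun v hv => ?_⟩
  · by_cases hvw : v = w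
    · rw [hvw, hgw]
    by_cases hvu : v = u
    · simp [g, hvu, Function.update_of_ne huw]
    rw [hg_of_ne v hvw hvu]
    exact hf.1 v
  by_cases hvu : v = u
  · have : univ.filter (G.Adj u) = {w} := by ext; simp [hw]
    rw [hvu, this, sum_singleton, hgw]
  have hvw : v ≠ w := by rintro rfl; omega
  calc 2 ≤ ∑ x ∈ univ.filter (G.Adj v), f x := hf.2 v (by rwa [← hg_of_ne v hvw hvu])
    _ ≤ ∑ x ∈ univ.filter (G.Adj v), g x := sum_le_sum fun x hx => by
      -- a neighbour of `v` is not `u`, since the only neighbour of `u` is `w ≠ v`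
      have hxu : x ≠ u := by
        rintro rfl
        exact hvw ((hw v).1 (mem_filter.1 hx).2.symm)
      by_cases hxw : x = w
      · rw [hxw, hgw]; exact hf.1 w
      · rw [hg_of_ne x hxw hxu]

theorem sum_update_pendant (f : V → ℕ) {u w : V} (huw : u ≠ w) :
    ∑ v, Function.update (Function.update f u 0) w 2 v + f u + f w = ∑ v, f v + 2 := by
  have h₁ := sum_update_add_self (Function.update f u 0) w 2
  have h₂ := sum_update_add_self f u 0
  rw [Function.update_of_ne huw.symm] at h₁
  omega

end Italian

theorem pendant_vertex_idf {V : Type*} [Fintype V] (G : SimpleGraph V) (u : V)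
    (hu : G.degree u = 1) :
    ∃ f : V → ℕ, IsItalian G f ∧ (∑ v, f v) = italianDomNumber G ∧ f u ≠ 2 := by
  obtain ⟨f, hf, hf_min⟩ := exists_isItalian_sum_eq_italianDomNumber (G := G)
  by_cases hfu : f u = 2
  swap
  · exact ⟨f, hf, hf_min, hfu⟩
  obtain ⟨w, hw⟩ := card_eq_one.mp hu
  have hadj : ∀ v, G.Adj u v ↔ v = w := fun v => by rw [← mem_neighborFinset, hw, mem_singleton]
  have huw : u ≠ w := G.ne_of_adj ((hadj w).2 rfl)
  have hg := hf.update_pendant hadj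
  have hweight := sum_update_pendant f huw
  refine ⟨_, hg, le_antisymm ?_ (italianDomNumber_le_sum hg), ?_⟩
  · omega
  · simp [Function.update_of_ne huw]
end

section
/- For every pair of integers n ≥ 1 and a with n + 1 ≤ a ≤ 2n, there exists a graph G on n vertices with γ_I(G ⊙ K_1) = a. In particular, for G = K_{1,m} ∪ (n−m−1)K_1 with 0 ≤ m ≤ n−1, one has γ_I(G ⊙ K_1) = 2n − m. -/
open SimpleGraph Finset
open scoped Classical

/-- The graph `K_{1,m} ∪ (n-m-1)K₁` on `Fin n`: vertex `0` is adjacent to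
vertices `1, …, m`; all other vertices are isolated. -/
def starUnionIsolated (n m : ℕ) : SimpleGraph (Fin n) :=
  SimpleGraph.fromRel (fun i j => (i : ℕ) = 0 ∧ (j : ℕ) ≠ 0 ∧ (j : ℕ) ≤ m)

section Aux
variable {V : Type*} [Fintype V] (G : SimpleGraph V)

lemma coronaK1_adj_inl_inl (u v : V) :
    (coronaK1 G).Adj (Sum.inl u) (Sum.inl v) ↔ G.Adj u v := by
  simp only [coronaK1, SimpleGraph.fromRel_adj]
  constructor
  · rintro ⟨h, h1 | h1⟩
    · exact h1
    · exact h1.symm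
  · intro h
    exact ⟨by simp [G.ne_of_adj h], Or.inl h⟩

lemma coronaK1_adj_inl_inr (u v : V) :
    (coronaK1 G).Adj (Sum.inl u) (Sum.inr v) ↔ u = v := by
  simp only [coronaK1, SimpleGraph.fromRel_adj]
  constructor
  · rintro ⟨h, h1 | h1⟩ <;> simp_all
  · rintro rfl; exact ⟨by simp, Or.inl rfl⟩

lemma coronaK1_adj_inr_inl (u v : V) :
    (coronaK1 G).Adj (Sum.inr u) (Sum.inl v) ↔ u = v := by
  simp only [coronaK1, SimpleGraph.fromRel_adj]
  constructor
  · rintro ⟨h, h1 | h1⟩ <;> simp_all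
  · rintro rfl; exact ⟨by simp, Or.inl rfl⟩

lemma coronaK1_adj_inr_inr (u v : V) :
    ¬ (coronaK1 G).Adj (Sum.inr u) (Sum.inr v) := by
  simp [coronaK1, SimpleGraph.fromRel_adj]

lemma filter_inr (v : V) :
    Finset.univ.filter (fun w => (coronaK1 G).Adj (Sum.inr v) w) = {Sum.inl v} := by
  ext w
  cases w with
  | inl u => simp [coronaK1_adj_inr_inl, eq_comm]
  | inr u => simp [coronaK1_adj_inr_inr]

lemma filter_inl_isolated (v : V) (hv : ∀ u, ¬ G.Adj v u) :
    Finset.univ.filter (fun w => (coronaK1 G).Adj (Sum.inl v) w) = {Sum.inr v} := by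
  ext w
  cases w with
  | inl u => simp [coronaK1_adj_inl_inl, hv]
  | inr u => simp [coronaK1_adj_inl_inr, eq_comm]

end Aux

lemma star_adj (n m : ℕ) (i j : Fin n) :
    (starUnionIsolated n m).Adj i j ↔ i ≠ j ∧
      (((i:ℕ) = 0 ∧ (j:ℕ) ≠ 0 ∧ (j:ℕ) ≤ m) ∨ ((j:ℕ) = 0 ∧ (i:ℕ) ≠ 0 ∧ (i:ℕ) ≤ m)) := by
  simp [starUnionIsolated, SimpleGraph.fromRel_adj]

lemma star_isolated (n m : ℕ) (v : Fin n)
    (hv : m < (v:ℕ) ∨ ((v:ℕ) = 0 ∧ m = 0)) :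
    ∀ u, ¬ (starUnionIsolated n m).Adj v u := by
  intro u h
  rw [star_adj] at h
  rcases h with ⟨-, h⟩
  omega

lemma filter_inl_leaf (n m : ℕ) (hn : 0 < n) (v : Fin n)
    (hv1 : (v:ℕ) ≠ 0) (hv2 : (v:ℕ) ≤ m) :
    Finset.univ.filter
        (fun w => (coronaK1 (starUnionIsolated n m)).Adj (Sum.inl v) w)
      = {Sum.inl (⟨0, hn⟩ : Fin n), Sum.inr v} := by
  ext w
  cases w with
  | inl u =>
      simp only [Finset.mem_filter, Finset.mem_univ, true_and, Finset.mem_insert,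
        Finset.mem_singleton, coronaK1_adj_inl_inl, star_adj]
      constructor
      · rintro ⟨hne, h | h⟩
        · omega
        · left; apply congrArg Sum.inl; apply Fin.ext; simpa using h.1
      · rintro (h | h)
        · rcases Sum.inl.inj h with rfl
          exact ⟨by intro he; apply hv1; rw [he], Or.inr ⟨rfl, hv1, hv2⟩⟩
        · exact absurd h (by simp)
  | inr u =>
      simp only [Finset.mem_filter, Finset.mem_univ, true_and, Finset.mem_insert,
        Finset.mem_singleton, coronaK1_adj_inl_inr]
      constructor
      · rintro rfl; simp
      · rintro (h | h)
        · exact absurd h (by simp)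
        · rcases Sum.inr.inj h with rfl; rfl

lemma sum_indicator (n : ℕ) (p : ℕ → Prop) [DecidablePred p] :
    ∑ i ∈ Finset.range n, (if p i then 1 else 0) = ((Finset.range n).filter p).card := by
  simp [Finset.sum_ite]

lemma card_eq0 (n : ℕ) (hn : 0 < n) :
    ((Finset.range n).filter (fun i => i = 0)).card = 1 := by
  have : (Finset.range n).filter (fun i => i = 0) = {0} := by
    ext i; simp only [Finset.mem_filter, Finset.mem_range, Finset.mem_singleton]; omega
  rw [this, Finset.card_singleton]

lemma card_ne0 (n : ℕ) :
    ((Finset.range n).filter (fun i => ¬ i = 0)).card = n - 1 := by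
  have : (Finset.range n).filter (fun i => ¬ i = 0) = Finset.Ico 1 n := by
    ext i; simp only [Finset.mem_filter, Finset.mem_range, Finset.mem_Ico]; omega
  rw [this, Nat.card_Ico]

lemma card_zor (n m : ℕ) (hm : m + 1 ≤ n) :
    ((Finset.range n).filter (fun i => i = 0 ∨ m < i)).card = n - m := by
  have h1 : (Finset.range n).filter (fun i => i = 0 ∨ m < i)
      = insert 0 (Finset.Ico (m+1) n) := by
    ext i
    simp only [Finset.mem_filter, Finset.mem_range, Finset.mem_insert, Finset.mem_Ico]
    omega
  rw [h1, Finset.card_insert_of_notMem (by simp), Nat.card_Ico]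
  omega

lemma key (n m : ℕ) (hm : m + 1 ≤ n) :
    italianDomNumber (coronaK1 (starUnionIsolated n m)) = 2 * n - m := by
  have hn : 0 < n := by omega
  set z : Fin n := ⟨0, hn⟩ with hz
  set f : Fin n ⊕ Fin n → ℕ :=
    Sum.elim (fun v => if (v:ℕ) = 0 then 2 else if (v:ℕ) ≤ m then 0 else 1)
      (fun v => if (v:ℕ) = 0 then 0 else 1) with hf
  have hfI : IsItalian (coronaK1 (starUnionIsolated n m)) f := by
    constructor
    · rintro (v | v) <;> simp only [hf, Sum.elim_inl, Sum.elim_inr] <;> split_ifs <;> omega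
    · rintro (v | v) hv
      · simp only [hf, Sum.elim_inl] at hv
        have hv1 : (v:ℕ) ≠ 0 := by intro h; rw [if_pos h] at hv; omega
        have hv2 : (v:ℕ) ≤ m := by by_contra h; rw [if_neg hv1, if_neg h] at hv; omega
        rw [filter_inl_leaf n m hn v hv1 hv2, Finset.sum_pair (by simp)]
        simp [hf, hv1]
      · simp only [hf, Sum.elim_inr] at hv
        have hv0 : (v:ℕ) = 0 := by by_contra h; rw [if_neg h] at hv; omega
        rw [filter_inr, Finset.sum_singleton]
        simp [hf, hv0]
  have hsum : ∑ x, f x = 2 * n - m := by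
    rw [Fintype.sum_sum_type]
    have h1 : ∑ v : Fin n, f (Sum.inl v)
        = ∑ i ∈ Finset.range n, (if i = 0 then 2 else if i ≤ m then 0 else 1) := by
      simp only [hf, Sum.elim_inl]
      exact Fin.sum_univ_eq_sum_range (fun i => if i = 0 then 2 else if i ≤ m then 0 else 1) n
    have h2 : ∑ v : Fin n, f (Sum.inr v)
        = ∑ i ∈ Finset.range n, (if i = 0 then 0 else 1) := by
      simp only [hf, Sum.elim_inr]
      exact Fin.sum_univ_eq_sum_range (fun i => if i = 0 then 0 else 1) n
    have h3 : ∑ i ∈ Finset.range n, (if i = 0 then 2 else if i ≤ m then 0 else 1)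
        = ∑ i ∈ Finset.range n,
            ((if i = 0 then 1 else 0) + (if i = 0 ∨ m < i then 1 else 0)) := by
      apply Finset.sum_congr rfl
      intro i _
      split_ifs <;> omega
    have h4 : ∑ i ∈ Finset.range n, (if i = 0 then 0 else 1)
        = ∑ i ∈ Finset.range n, (if ¬ i = 0 then 1 else 0) := by
      apply Finset.sum_congr rfl
      intro i _
      split_ifs <;> omega
    rw [h1, h2, h3, h4, Finset.sum_add_distrib, sum_indicator, sum_indicator,
      sum_indicator, card_eq0 n hn, card_ne0 n, card_zor n m hm]
    omega
  have hmem : (2*n - m) ∈ {w | ∃ g : Fin n ⊕ Fin n → ℕ,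
      IsItalian (coronaK1 (starUnionIsolated n m)) g ∧ ∑ v, g v = w} := ⟨f, hfI, hsum⟩
  have hlower : ∀ w ∈ {w | ∃ g : Fin n ⊕ Fin n → ℕ,
      IsItalian (coronaK1 (starUnionIsolated n m)) g ∧ ∑ v, g v = w}, 2*n - m ≤ w := by
    rintro w ⟨g, ⟨hg1, hg2⟩, rfl⟩
    have fa : ∀ v : Fin n, g (Sum.inr v) = 0 → 2 ≤ g (Sum.inl v) := by
      intro v hv
      have h := hg2 (Sum.inr v) hv
      rwa [filter_inr, Finset.sum_singleton] at h
    have fb : ∀ v : Fin n, (m < (v:ℕ) ∨ ((v:ℕ) = 0 ∧ m = 0)) →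
        g (Sum.inl v) = 0 → 2 ≤ g (Sum.inr v) := by
      intro v hv h0
      have h := hg2 (Sum.inl v) h0
      rwa [filter_inl_isolated _ v (star_isolated n m v hv), Finset.sum_singleton] at h
    have fd : ∀ v : Fin n, (v:ℕ) ≠ 0 → (v:ℕ) ≤ m → g (Sum.inl v) = 0 →
        2 ≤ g (Sum.inl z) + g (Sum.inr v) := by
      intro v hv1 hv2 h0
      have h := hg2 (Sum.inl v) h0
      rwa [filter_inl_leaf n m hn v hv1 hv2, Finset.sum_pair (by simp)] at h
    have hsplit : ∑ x, g x = ∑ v : Fin n, (g (Sum.inl v) + g (Sum.inr v)) := by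
      rw [Fintype.sum_sum_type, ← Finset.sum_add_distrib]
    rw [hsplit]
    have hiso : ∀ v : Fin n, m < (v:ℕ) ∨ ((v:ℕ) = 0 ∧ m = 0) →
        2 ≤ g (Sum.inl v) + g (Sum.inr v) := by
      intro v hv
      rcases Nat.eq_zero_or_pos (g (Sum.inr v)) with h | h
      · have := fa v h; omega
      · rcases Nat.eq_zero_or_pos (g (Sum.inl v)) with h' | h'
        · have := fb v hv h'; omega
        · omega
    by_cases hc : 2 ≤ g (Sum.inl z) + g (Sum.inr z)
    · have hpt : ∀ v : Fin n,
          1 + (if (v:ℕ) = 0 ∨ m < (v:ℕ) then 1 else 0)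
            ≤ g (Sum.inl v) + g (Sum.inr v) := by
        intro v
        by_cases h0 : (v:ℕ) = 0
        · have hvz : v = z := Fin.ext (by simpa using h0)
          rw [if_pos (Or.inl h0), hvz]
          omega
        · by_cases h1 : m < (v:ℕ)
          · have := hiso v (Or.inl h1); rw [if_pos (Or.inr h1)]; omega
          · rw [if_neg (by tauto)]
            rcases Nat.eq_zero_or_pos (g (Sum.inr v)) with h | h
            · have := fa v h; omega
            · omega
      have hle : ∑ v : Fin n, (1 + (if (v:ℕ) = 0 ∨ m < (v:ℕ) then 1 else 0))
          ≤ ∑ v : Fin n, (g (Sum.inl v) + g (Sum.inr v)) :=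
        Finset.sum_le_sum (fun v _ => hpt v)
      have hval : ∑ v : Fin n, (1 + (if (v:ℕ) = 0 ∨ m < (v:ℕ) then 1 else 0))
          = n + (n - m) := by
        rw [Finset.sum_add_distrib, Finset.sum_const, Finset.card_univ, Fintype.card_fin,
          Fin.sum_univ_eq_sum_range (fun i => if i = 0 ∨ m < i then 1 else 0) n,
          sum_indicator, card_zor n m hm]
        simp [Nat.smul_one_eq_cast]
      omega
    · have hm1 : 1 ≤ m := by
        by_contra h
        have hm0 : m = 0 := by omega
        have := hiso z (Or.inr ⟨rfl, hm0⟩)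
        omega
      have hz0 : g (Sum.inl z) = 0 := by
        rcases Nat.eq_zero_or_pos (g (Sum.inr z)) with h | h
        · have := fa z h; omega
        · omega
      have hpt : ∀ v : Fin n,
          (if (v:ℕ) = 0 then 1 else 2) ≤ g (Sum.inl v) + g (Sum.inr v) := by
        intro v
        by_cases h0 : (v:ℕ) = 0
        · rw [if_pos h0]
          rcases Nat.eq_zero_or_pos (g (Sum.inr v)) with h | h
          · have := fa v h; omega
          · omega
        · rw [if_neg h0]
          by_cases h1 : m < (v:ℕ)
          · exact hiso v (Or.inl h1)
          · rcases Nat.eq_zero_or_pos (g (Sum.inl v)) with h | h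
            · have := fd v h0 (by omega) h; omega
            · rcases Nat.eq_zero_or_pos (g (Sum.inr v)) with h' | h'
              · have := fa v h'; omega
              · omega
      have hle : ∑ v : Fin n, (if (v:ℕ) = 0 then 1 else 2)
          ≤ ∑ v : Fin n, (g (Sum.inl v) + g (Sum.inr v)) :=
        Finset.sum_le_sum (fun v _ => hpt v)
      have hval : ∑ v : Fin n, (if (v:ℕ) = 0 then 1 else 2) = n + (n - 1) := by
        have he : ∀ i : ℕ, (if i = 0 then 1 else 2) = 1 + (if ¬ i = 0 then 1 else 0) := by
          intro i; split_ifs <;> omega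
        rw [Fin.sum_univ_eq_sum_range (fun i => if i = 0 then 1 else 2) n]
        simp only [he]
        rw [Finset.sum_add_distrib, Finset.sum_const, Finset.card_range,
          sum_indicator, card_ne0 n]
        simp [Nat.smul_one_eq_cast]
      omega
  rw [italianDomNumber]
  exact le_antisymm (Nat.sInf_le hmem) (le_csInf ⟨_, hmem⟩ hlower)

theorem italian_coronaK1_realizable (n : ℕ) (hn : 1 ≤ n) :
    (∀ a : ℕ, n + 1 ≤ a → a ≤ 2 * n →
      ∃ G : SimpleGraph (Fin n), italianDomNumber (coronaK1 G) = a) ∧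
    (∀ m : ℕ, m ≤ n - 1 →
      italianDomNumber (coronaK1 (starUnionIsolated n m)) = 2 * n - m) := by
  constructor
  · intro a ha1 ha2
    refine ⟨starUnionIsolated n (2*n - a), ?_⟩
    rw [key n (2*n - a) (by omega)]
    omega
  · intro m hm
    exact key n m (by omega)
end

section
/- Let G be a graph on n vertices. Then γ_I(G ⊙ K_1) = 2n if and only if G has no edges (G is the empty graph on n vertices). -/
open SimpleGraph Finset
open scoped Classical

lemma coronaK1_adj {V : Type*} (G : SimpleGraph V) (a b : V ⊕ V) :
    (coronaK1 G).Adj a b ↔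
      (∃ u v, a = Sum.inl u ∧ b = Sum.inl v ∧ G.Adj u v) ∨
      (∃ v, a = Sum.inl v ∧ b = Sum.inr v) ∨
      (∃ v, a = Sum.inr v ∧ b = Sum.inl v) := by
  cases a with
  | inl u => cases b with
    | inl v =>
      simp only [coronaK1, SimpleGraph.fromRel_adj]
      constructor
      · rintro ⟨hne, h | h⟩
        · exact Or.inl ⟨u, v, rfl, rfl, h⟩
        · exact Or.inl ⟨u, v, rfl, rfl, h.symm⟩
      · rintro (⟨u', v', h1, h2, h⟩ | ⟨v', h1, h2⟩ | ⟨v', h1, h2⟩) <;>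
          simp_all
        exact fun hh => G.irrefl (hh ▸ h)
    | inr v =>
      simp only [coronaK1, SimpleGraph.fromRel_adj]
      constructor
      · rintro ⟨hne, h | h⟩
        · exact Or.inr (Or.inl ⟨u, rfl, by simp [h]⟩)
        · exact Or.inr (Or.inl ⟨u, rfl, by simp [h]⟩)
      · rintro (⟨u', v', h1, h2, h⟩ | ⟨v', h1, h2⟩ | ⟨v', h1, h2⟩) <;> simp_all
  | inr u => cases b with
    | inl v =>
      simp only [coronaK1, SimpleGraph.fromRel_adj]
      constructor
      · rintro ⟨hne, h | h⟩
        · exact Or.inr (Or.inr ⟨u, rfl, by simp [h]⟩)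
        · exact Or.inr (Or.inr ⟨u, rfl, by simp [h]⟩)
      · rintro (⟨u', v', h1, h2, h⟩ | ⟨v', h1, h2⟩ | ⟨v', h1, h2⟩) <;> simp_all
    | inr v =>
      simp only [coronaK1, SimpleGraph.fromRel_adj]
      constructor
      · rintro ⟨hne, h | h⟩ <;> exact h.elim
      · rintro (⟨u', v', h1, h2, h⟩ | ⟨v', h1, h2⟩ | ⟨v', h1, h2⟩) <;> simp_all

/-- The constant-one function witnesses `γ_I ≤ 2n` for the corona. -/
lemma coronaK1_weight_mem {V : Type*} [Fintype V] (G : SimpleGraph V) :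
    2 * Fintype.card V ∈
      {w | ∃ f : V ⊕ V → ℕ, IsItalian (coronaK1 G) f ∧ ∑ v, f v = w} := by
  refine ⟨fun _ => 1, ⟨fun v => one_le_two, fun v hv => by simp at hv⟩, ?_⟩
  simp [Finset.card_univ, Fintype.card_sum, two_mul]

lemma bot_lower_bound {V : Type*} [Fintype V] (f : V ⊕ V → ℕ)
    (hf : IsItalian (coronaK1 (⊥ : SimpleGraph V)) f) :
    2 * Fintype.card V ≤ ∑ x, f x := by
  have key : ∀ v : V, 2 ≤ f (Sum.inl v) + f (Sum.inr v) := by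
    intro v
    have hl : Finset.univ.filter
        (fun w => (coronaK1 (⊥ : SimpleGraph V)).Adj (Sum.inl v) w) = {Sum.inr v} := by
      ext w
      simp only [Finset.mem_filter, Finset.mem_univ, true_and, Finset.mem_singleton,
        coronaK1_adj]
      constructor
      · rintro (⟨u', v', h1, h2, h⟩ | ⟨v', h1, h2⟩ | ⟨v', h1, h2⟩) <;> simp_all
      · rintro rfl; exact Or.inr (Or.inl ⟨v, rfl, rfl⟩)
    have hr : Finset.univ.filter
        (fun w => (coronaK1 (⊥ : SimpleGraph V)).Adj (Sum.inr v) w) = {Sum.inl v} := by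
      ext w
      simp only [Finset.mem_filter, Finset.mem_univ, true_and, Finset.mem_singleton,
        coronaK1_adj]
      constructor
      · rintro (⟨u', v', h1, h2, h⟩ | ⟨v', h1, h2⟩ | ⟨v', h1, h2⟩) <;> simp_all
      · rintro rfl; exact Or.inr (Or.inr ⟨v, rfl, rfl⟩)
    rcases Nat.eq_zero_or_pos (f (Sum.inl v)) with h0 | h1
    · have := hf.2 (Sum.inl v) h0
      rw [hl, Finset.sum_singleton] at this
      omega
    rcases Nat.eq_zero_or_pos (f (Sum.inr v)) with h0 | h2
    · have := hf.2 (Sum.inr v) h0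
      rw [hr, Finset.sum_singleton] at this
      omega
    omega
  calc 2 * Fintype.card V = ∑ _v : V, 2 := by simp [Finset.card_univ, mul_comm]
    _ ≤ ∑ v : V, (f (Sum.inl v) + f (Sum.inr v)) := Finset.sum_le_sum fun v _ => key v
    _ = ∑ x, f x := by rw [Fintype.sum_sum_type, Finset.sum_add_distrib]

theorem italian_coronaK1_eq_two_mul_iff_bot {V : Type*} [Fintype V]
    (G : SimpleGraph V) :
    italianDomNumber (coronaK1 G) = 2 * Fintype.card V ↔ G = ⊥ := by
  constructor
  · intro h
    by_contra hne
    obtain ⟨u, v, huv⟩ : ∃ u v, G.Adj u v := by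
      by_contra hc
      push_neg at hc
      exact hne (by ext a b; simp [hc a b])
    have hvu : v ≠ u := (G.ne_of_adj huv).symm
    -- the weight 2n-1 function
    set f : V ⊕ V → ℕ :=
      Sum.elim (fun w => if w = v then 0 else 2) (fun w => if w = v then 1 else 0) with hfdef
    have hital : IsItalian (coronaK1 G) f := by
      constructor
      · rintro (w | w) <;> simp [hfdef] <;> split_ifs <;> omega
      · rintro (w | w) hw
        · simp only [hfdef, Sum.elim_inl] at hw
          split_ifs at hw with hwv
          subst hwv
          have hmem : Sum.inl u ∈ Finset.univ.filter
              (fun x => (coronaK1 G).Adj (Sum.inl w) x) := by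
            simp only [Finset.mem_filter, Finset.mem_univ, true_and, coronaK1_adj]
            exact Or.inl ⟨w, u, rfl, rfl, huv.symm⟩
          calc (2 : ℕ) = f (Sum.inl u) := by simp [hfdef, hvu.symm]
            _ ≤ _ := Finset.single_le_sum (fun i _ => Nat.zero_le _) hmem
        · simp only [hfdef, Sum.elim_inr] at hw
          split_ifs at hw with hwv
          have hmem : Sum.inl w ∈ Finset.univ.filter
              (fun x => (coronaK1 G).Adj (Sum.inr w) x) := by
            simp only [Finset.mem_filter, Finset.mem_univ, true_and, coronaK1_adj]
            exact Or.inr (Or.inr ⟨w, rfl, rfl⟩)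
          calc (2 : ℕ) = f (Sum.inl w) := by simp [hfdef, hwv]
            _ ≤ _ := Finset.single_le_sum (fun i _ => Nat.zero_le _) hmem
    have hsum : ∑ x, f x + 1 = 2 * Fintype.card V := by
      have h1 : ∑ x, f x = ∑ w : V, (if w = v then 0 else 2) +
          ∑ w : V, (if w = v then 1 else 0) := by
        rw [Fintype.sum_sum_type]; simp [hfdef]
      have h2 : ∑ w : V, (if w = v then (1:ℕ) else 0) = 1 := by
        simp [Finset.sum_ite_eq']
      have h3 : ∑ w : V, (if w = v then (0:ℕ) else 2) + 2 = 2 * Fintype.card V := by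
        have : ∑ w : V, (if w = v then (2:ℕ) else 0) = 2 := by
          simp [Finset.sum_ite_eq']
        calc ∑ w : V, (if w = v then (0:ℕ) else 2) + 2
            = ∑ w : V, (if w = v then (0:ℕ) else 2) +
              ∑ w : V, (if w = v then (2:ℕ) else 0) := by rw [this]
          _ = ∑ w : V, ((if w = v then (0:ℕ) else 2) + (if w = v then 2 else 0)) := by
              rw [Finset.sum_add_distrib]
          _ = ∑ _w : V, (2:ℕ) := by
              apply Finset.sum_congr rfl; intro w _; split_ifs <;> rfl
          _ = 2 * Fintype.card V := by simp [Finset.card_univ, mul_comm]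
      omega
    have hle : italianDomNumber (coronaK1 G) ≤ ∑ x, f x :=
      Nat.sInf_le ⟨f, hital, rfl⟩
    rw [h] at hle
    omega
  · rintro rfl
    apply le_antisymm
    · exact Nat.sInf_le (coronaK1_weight_mem ⊥)
    · have hne : {w | ∃ f : V ⊕ V → ℕ,
          IsItalian (coronaK1 (⊥ : SimpleGraph V)) f ∧ ∑ x, f x = w}.Nonempty :=
        ⟨_, coronaK1_weight_mem ⊥⟩
      obtain ⟨f, hf, hw⟩ := Nat.sInf_mem hne
      rw [italianDomNumber, ← hw]
      exact bot_lower_bound f hf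
end

section
/- For the cycle C_n on n ≥ 3 vertices, γ_I(C_n ⊙ K_1) = ⌈4n/3⌉. -/
/-!
Write `w v = f (inl v) + f (inr v)` for the weight an Italian function `f` on `G ⊙ K₁` puts on a
vertex and its pendant. The pendant condition gives `w v ≥ 1`, and `w v = 1` forces `f (inl v) = 0`,
so some neighbour `u` has `f (inl u) ≥ 1`, whence `w u ≥ 2`. Hence every closed neighbourhood
carries weight at least `deg v + 2`; summing over a `d`-regular graph counts each vertex `d + 1`
times, so `(d + 2) n ≤ (d + 1) w(f)`, which is `4n ≤ 3 w(f)` for the cycle.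
Conversely a dominating set `D` of `G` yields the Italian function with `2` on `D` and `1` on the
pendants of the other vertices, of weight `n + |D|`; the multiples of `3` dominate `C_n` and there
are `⌈n / 3⌉` of them.
-/

open SimpleGraph Finset
open scoped Classical

open Sum

namespace SimpleGraph

variable {V : Type*} {G : SimpleGraph V}

lemma sum_sum_neighborFinset {M : Type*} [AddCommMonoid M] [Fintype V] [DecidableRel G.Adj]
    (g : V → M) : ∑ v, ∑ u ∈ G.neighborFinset v, g u = ∑ u, G.degree u • g u := by
  rw [Finset.sum_comm' (t' := univ) (s' := fun u => G.neighborFinset u)]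
  · simp [card_neighborFinset_eq_degree]
  · simp [adj_comm]

def IsDominatingSet (G : SimpleGraph V) (D : Finset V) : Prop :=
  ∀ v ∉ D, ∃ u ∈ D, G.Adj v u

section ItalianDomNumber

variable [Fintype V]

lemma isItalian_one (G : SimpleGraph V) : IsItalian G 1 :=
  ⟨fun _ => by simp, fun _ h => by simp at h⟩

lemma italianDomNumber_le {f : V → ℕ} (hf : IsItalian G f) : italianDomNumber G ≤ ∑ v, f v :=
  Nat.sInf_le ⟨f, hf, rfl⟩

lemma le_italianDomNumber {k : ℕ} (h : ∀ f, IsItalian G f → k ≤ ∑ v, f v) :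
    k ≤ italianDomNumber G :=
  le_csInf ⟨_, 1, isItalian_one G, rfl⟩ fun _ ⟨f, hf, hw⟩ => hw ▸ h f hf

end ItalianDomNumber

section Corona

@[simp]
lemma coronaK1_adj_inl_inl {u v : V} : (coronaK1 G).Adj (inl u) (inl v) ↔ G.Adj u v := by
  simp only [coronaK1, fromRel_adj, ne_eq, inl.injEq]
  exact ⟨fun h => h.2.elim id fun h => h.symm, fun h => ⟨h.ne, .inl h⟩⟩

@[simp]
lemma coronaK1_adj_inl_inr {u v : V} : (coronaK1 G).Adj (inl u) (inr v) ↔ u = v := by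
  simp [coronaK1, eq_comm]

@[simp]
lemma coronaK1_adj_inr_inl {u v : V} : (coronaK1 G).Adj (inr u) (inl v) ↔ u = v := by
  simp [coronaK1, eq_comm]

@[simp]
lemma coronaK1_adj_inr_inr {u v : V} : ¬(coronaK1 G).Adj (inr u) (inr v) := by
  simp [coronaK1]

def pairWeight (f : V ⊕ V → ℕ) (v : V) : ℕ := f (inl v) + f (inr v)

variable [Fintype V]

lemma sum_eq_sum_pairWeight (f : V ⊕ V → ℕ) : ∑ x, f x = ∑ v, pairWeight f v := by
  rw [Fintype.sum_sum_type, ← Finset.sum_add_distrib]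
  rfl

lemma sum_coronaK1_adj_inr (f : V ⊕ V → ℕ) (v : V) :
    ∑ x ∈ univ.filter ((coronaK1 G).Adj (inr v)), f x = f (inl v) := by
  simp [Finset.sum_filter, Fintype.sum_sum_type]

variable [DecidableRel G.Adj]

lemma sum_coronaK1_adj_inl (f : V ⊕ V → ℕ) (v : V) :
    ∑ x ∈ univ.filter ((coronaK1 G).Adj (inl v)), f x =
      ∑ u ∈ G.neighborFinset v, f (inl u) + f (inr v) := by
  simp [Finset.sum_filter, Fintype.sum_sum_type, neighborFinset_eq_filter]

lemma isItalian_coronaK1_iff {f : V ⊕ V → ℕ} :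
    IsItalian (coronaK1 G) f ↔ (∀ x, f x ≤ 2) ∧ (∀ v, f (inr v) = 0 → 2 ≤ f (inl v)) ∧
      ∀ v, f (inl v) = 0 → 2 ≤ ∑ u ∈ G.neighborFinset v, f (inl u) + f (inr v) := by
  simp only [IsItalian, Sum.forall (p := fun x => f x = 0 → _), sum_coronaK1_adj_inl,
    sum_coronaK1_adj_inr]
  tauto

namespace IsItalian

variable {f : V ⊕ V → ℕ} (hf : IsItalian (coronaK1 G) f)
include hf

lemma one_le_pairWeight (v : V) : 1 ≤ pairWeight f v := by
  have := (isItalian_coronaK1_iff.1 hf).2.1 v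
  unfold pairWeight
  omega

lemma inl_eq_zero_of_pairWeight_eq_one {v : V} (hv : pairWeight f v = 1) : f (inl v) = 0 := by
  have := (isItalian_coronaK1_iff.1 hf).2.1 v
  unfold pairWeight at hv
  omega

lemma exists_adj_two_le_pairWeight {v : V} (hv : pairWeight f v = 1) :
    ∃ u, G.Adj v u ∧ 2 ≤ pairWeight f u := by
  have hsum := (isItalian_coronaK1_iff.1 hf).2.2 v (hf.inl_eq_zero_of_pairWeight_eq_one hv)
  have hpos : ∑ u ∈ G.neighborFinset v, f (inl u) ≠ 0 := by
    unfold pairWeight at hv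
    omega
  obtain ⟨u, hu, hfu⟩ := Finset.exists_ne_zero_of_sum_ne_zero hpos
  refine ⟨u, (G.mem_neighborFinset v u).1 hu, ?_⟩
  have := hf.one_le_pairWeight u
  have := mt hf.inl_eq_zero_of_pairWeight_eq_one hfu
  omega

lemma degree_add_two_le (v : V) :
    G.degree v + 2 ≤ pairWeight f v + ∑ u ∈ G.neighborFinset v, pairWeight f u := by
  have hsplit : ∑ u ∈ G.neighborFinset v, pairWeight f u =
      ∑ u ∈ G.neighborFinset v, (pairWeight f u - 1) + G.degree v := by
    rw [← card_neighborFinset_eq_degree, Finset.card_eq_sum_ones, ← Finset.sum_add_distrib]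
    exact Finset.sum_congr rfl fun u _ => (Nat.sub_add_cancel (hf.one_le_pairWeight u)).symm
  rcases (hf.one_le_pairWeight v).eq_or_lt with hv | hv
  · obtain ⟨u, hu, h2⟩ := hf.exists_adj_two_le_pairWeight hv.symm
    have := Finset.single_le_sum (fun u _ => Nat.zero_le (pairWeight f u - 1))
      ((G.mem_neighborFinset v u).2 hu)
    omega
  · omega

lemma le_sum_of_isRegularOfDegree {d : ℕ} (hG : G.IsRegularOfDegree d) :
    (d + 2) * Fintype.card V ≤ (d + 1) * ∑ x, f x := by
  calc (d + 2) * Fintype.card V = ∑ v, (G.degree v + 2) := by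
        simp [hG.degree_eq, mul_comm]
    _ ≤ ∑ v, (pairWeight f v + ∑ u ∈ G.neighborFinset v, pairWeight f u) :=
        Finset.sum_le_sum fun v _ => hf.degree_add_two_le v
    _ = (d + 1) * ∑ x, f x := by
        rw [Finset.sum_add_distrib, sum_sum_neighborFinset, sum_eq_sum_pairWeight]
        simp only [hG.degree_eq, smul_eq_mul, ← Finset.mul_sum]
        ring

end IsItalian

variable [DecidableEq V]

def italianOfDominatingSet (D : Finset V) : V ⊕ V → ℕ
  | inl v => if v ∈ D then 2 else 0
  | inr v => if v ∈ D then 0 else 1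

lemma isItalian_italianOfDominatingSet {D : Finset V} (hD : G.IsDominatingSet D) :
    IsItalian (coronaK1 G) (italianOfDominatingSet D) := by
  refine isItalian_coronaK1_iff.2 ⟨?_, fun v => ?_, fun v hv => ?_⟩
  · rintro (v | v) <;> simp only [italianOfDominatingSet] <;> split_ifs <;> omega
  · simp only [italianOfDominatingSet]
    split_ifs <;> simp
  · have hvD : v ∉ D := by simpa [italianOfDominatingSet] using hv
    obtain ⟨u, huD, hvu⟩ := hD v hvD
    have := Finset.single_le_sum (f := fun u => italianOfDominatingSet D (inl u))
      (fun _ _ => Nat.zero_le _) ((G.mem_neighborFinset v u).2 hvu)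
    simp only [italianOfDominatingSet, huD, hvD, if_true, if_false] at this ⊢
    omega

omit [DecidableRel G.Adj] in
lemma sum_italianOfDominatingSet (D : Finset V) :
    ∑ x, italianOfDominatingSet D x = Fintype.card V + #D := by
  have hpair : ∀ v, pairWeight (italianOfDominatingSet D) v = 1 + if v ∈ D then 1 else 0 := by
    intro v
    simp only [pairWeight, italianOfDominatingSet]
    split_ifs <;> rfl
  rw [sum_eq_sum_pairWeight, Finset.sum_congr rfl fun v _ => hpair v, Finset.sum_add_distrib,
    Finset.sum_boole]
  simp

end Corona

section Cycle

lemma isDominatingSet_cycleGraph (n : ℕ) :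
    (cycleGraph n).IsDominatingSet {i | (i : ℕ) % 3 = 0} := by
  intro v hv
  simp only [Finset.mem_filter, Finset.mem_univ, true_and] at hv
  simp only [Finset.mem_filter, Finset.mem_univ, true_and, cycleGraph_adj']
  rcases (by omega : v.val % 3 = 1 ∨ v.val % 3 = 2) with h1 | h2
  · refine ⟨⟨v - 1, by omega⟩, by dsimp only; omega, .inl ?_⟩
    rw [Fin.coe_sub_iff_le.2 (by simp [Fin.le_def])]
    dsimp only
    omega
  · by_cases hlast : v.val + 1 < n
    · refine ⟨⟨v + 1, hlast⟩, by dsimp only; omega, .inr ?_⟩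
      rw [Fin.coe_sub_iff_le.2 (by simp [Fin.le_def])]
      simp
    · refine ⟨⟨0, by omega⟩, rfl, .inr ?_⟩
      rw [Fin.coe_sub_iff_lt.2 (by simp [Fin.lt_def]; omega)]
      simp only [add_zero]
      omega

lemma card_filter_val_mod_three (n : ℕ) : #{i : Fin n | (i : ℕ) % 3 = 0} = (n + 2) / 3 := by
  rw [Finset.card_filter, Fin.sum_univ_eq_sum_range (fun i => if i % 3 = 0 then 1 else 0),
    ← Finset.card_filter, ← Nat.count_eq_card_filter_range]
  convert Nat.count_modEq_card n (r := 3) (by norm_num) 0 using 1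
  · simp only [Nat.ModEq, Nat.zero_mod]
    congr!
  · split_ifs <;> omega

lemma cycleGraph_isRegularOfDegree (m : ℕ) : (cycleGraph (m + 3)).IsRegularOfDegree 2 :=
  fun _ => cycleGraph_degree_three_le

end Cycle

end SimpleGraph

theorem italian_coronaK1_cycle (n : ℕ) (hn : 3 ≤ n) :
    italianDomNumber (coronaK1 (SimpleGraph.cycleGraph n)) = (4 * n + 2) / 3 := by
  obtain ⟨m, rfl⟩ : ∃ m, n = m + 3 := ⟨n - 3, by omega⟩
  have hupper := italianDomNumber_le <|
    isItalian_italianOfDominatingSet (isDominatingSet_cycleGraph (m + 3))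
  rw [sum_italianOfDominatingSet, card_filter_val_mod_three, Fintype.card_fin] at hupper
  have hlower : (4 * (m + 3) + 2) / 3 ≤ italianDomNumber (coronaK1 (cycleGraph (m + 3))) :=
    le_italianDomNumber fun f hf => by
      have := hf.le_sum_of_isRegularOfDegree (cycleGraph_isRegularOfDegree m)
      rw [Fintype.card_fin] at this
      omega
  omega
end

section
/- Let u and u′ be true twins in a graph G (i.e., N[u] = N[u′]). Then there exists a minimum-weight Italian dominating function f of G with f(u′) = 0. -/
open SimpleGraph Finset
open scoped Classical

theorem true_twin_idf {V : Type*} [Fintype V] (G : SimpleGraph V) (u u' : V)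
    (hne : u ≠ u')
    (htwin : insert u (G.neighborSet u) = insert u' (G.neighborSet u')) :
    ∃ f : V → ℕ, IsItalian G f ∧ (∑ v, f v) = italianDomNumber G ∧ f u' = 0 := by
  classical
  have hSne : {w | ∃ f : V → ℕ, IsItalian G f ∧ ∑ v, f v = w}.Nonempty :=
    ⟨∑ _v : V, 1, fun _ => 1, ⟨fun _ => one_le_two, fun v h => by simp at h⟩, rfl⟩
  have hmem := Nat.sInf_mem hSne
  obtain ⟨f, hf, hsum⟩ := hmem
  have hsum' : ∑ v, f v = italianDomNumber G := hsum
  clear hsum hSne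
  by_cases h0 : f u' = 0
  · exact ⟨f, hf, hsum', h0⟩
  have hb : 1 ≤ f u' := Nat.one_le_iff_ne_zero.mpr h0
  -- basic twin facts
  have hadj : G.Adj u u' := by
    have hu : u ∈ insert u' (G.neighborSet u') := by
      rw [← htwin]; exact Set.mem_insert _ _
    rcases Set.mem_insert_iff.mp hu with heq | hmem'
    · exact absurd heq hne
    · exact (G.mem_neighborSet _ _).mp hmem' |>.symm
  have hnb : ∀ w, w ≠ u → w ≠ u' → (G.Adj u w ↔ G.Adj u' w) := by
    intro w hw hw'
    constructor <;> intro h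
    · have : w ∈ insert u' (G.neighborSet u') := by
        rw [← htwin]; exact Set.mem_insert_of_mem _ h
      rcases Set.mem_insert_iff.mp this with heq | hmem'
      · exact absurd heq hw'
      · exact hmem'
    · have : w ∈ insert u (G.neighborSet u) := by
        rw [htwin]; exact Set.mem_insert_of_mem _ h
      rcases Set.mem_insert_iff.mp this with heq | hmem'
      · exact absurd heq hw
      · exact hmem'
  set g : V → ℕ := fun v => if v = u' then 0 else if v = u then min 2 (f u + f u') else f v
    with hg
  have hgu' : g u' = 0 := by simp [hg]
  have hgu : g u = min 2 (f u + f u') := by simp [hg, hne]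
  have hgo : ∀ v, v ≠ u → v ≠ u' → g v = f v := by
    intro v h1 h2; simp [hg, h1, h2]
  -- g is Italian
  have hgIt : IsItalian G g := by
    constructor
    · intro v
      by_cases h1 : v = u'
      · simp [h1, hgu']
      by_cases h2 : v = u
      · simp [h2, hgu]
      · rw [hgo v h2 h1]; exact hf.1 v
    · intro v hv
      by_cases h1 : v = u'
      · -- v = u'
        rw [h1]
        have humem : u ∈ Finset.univ.filter (fun w => G.Adj u' w) := by
          simp [hadj.symm]
        by_cases h2 : 2 ≤ f u + f u'
        · have : g u = 2 := by rw [hgu]; omega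
          calc (2 : ℕ) = g u := this.symm
            _ ≤ ∑ w ∈ Finset.univ.filter (fun w => G.Adj u' w), g w :=
              Finset.single_le_sum (fun _ _ => Nat.zero_le _) humem
        · -- f u + f u' ≤ 1, so f u = 0, f u' = 1
          have hfu : f u = 0 := by omega
          have hfu' : f u' = 1 := by omega
          have hdom := hf.2 u hfu
          have hu'mem : u' ∈ Finset.univ.filter (fun w => G.Adj u w) := by
            simp [hadj]
          -- the erased neighbor sets coincide
          have hAB : (Finset.univ.filter (fun w => G.Adj u w)).erase u'
              = (Finset.univ.filter (fun w => G.Adj u' w)).erase u := by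
            ext w
            simp only [Finset.mem_erase, Finset.mem_filter, Finset.mem_univ, true_and]
            constructor
            · rintro ⟨hw', hw⟩
              have hwu : w ≠ u := fun h => by subst h; exact G.irrefl hw
              exact ⟨hwu, (hnb w hwu hw').mp hw⟩
            · rintro ⟨hwu, hw⟩
              have hw' : w ≠ u' := fun h => by subst h; exact G.irrefl hw
              exact ⟨hw', (hnb w hwu hw').mpr hw⟩
          have h1 : f u' + ∑ w ∈ (Finset.univ.filter (fun w => G.Adj u w)).erase u', f w
              = ∑ w ∈ Finset.univ.filter (fun w => G.Adj u w), f w :=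
            Finset.add_sum_erase _ f hu'mem
          have h2 : g u + ∑ w ∈ (Finset.univ.filter (fun w => G.Adj u' w)).erase u, g w
              = ∑ w ∈ Finset.univ.filter (fun w => G.Adj u' w), g w :=
            Finset.add_sum_erase _ g humem
          have h3 : ∑ w ∈ (Finset.univ.filter (fun w => G.Adj u' w)).erase u, g w
              = ∑ w ∈ (Finset.univ.filter (fun w => G.Adj u w)).erase u', f w := by
            rw [← hAB]
            refine Finset.sum_congr rfl ?_
            intro w hw
            simp only [Finset.mem_erase, Finset.mem_filter] at hw
            have hwu : w ≠ u := fun h => by subst h; exact G.irrefl hw.2.2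
            exact hgo w hwu hw.1
          have hgu2 : g u = 1 := by rw [hgu]; omega
          omega
      by_cases h2 : v = u
      · rw [h2, hgu] at hv
        omega
      · -- v ≠ u, v ≠ u'
        have hfv : f v = 0 := by rw [← hgo v h2 h1]; exact hv
        have hdom := hf.2 v hfv
        by_cases h3 : G.Adj v u'
        · -- both u and u' are neighbors of v
          have h4 : G.Adj v u := by
            have := (hnb v h2 h1).mpr h3.symm
            exact this.symm
          have humem : u ∈ Finset.univ.filter (fun w => G.Adj v w) := by simp [h4]
          have hu'mem : u' ∈ (Finset.univ.filter (fun w => G.Adj v w)).erase u := by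
            simp [h3, hne.symm]
          have e1 : f u + ∑ w ∈ (Finset.univ.filter (fun w => G.Adj v w)).erase u, f w
              = ∑ w ∈ Finset.univ.filter (fun w => G.Adj v w), f w :=
            Finset.add_sum_erase _ f humem
          have e2 : f u' + ∑ w ∈ ((Finset.univ.filter (fun w => G.Adj v w)).erase u).erase u', f w
              = ∑ w ∈ (Finset.univ.filter (fun w => G.Adj v w)).erase u, f w :=
            Finset.add_sum_erase _ f hu'mem
          have e1g : g u + ∑ w ∈ (Finset.univ.filter (fun w => G.Adj v w)).erase u, g w
              = ∑ w ∈ Finset.univ.filter (fun w => G.Adj v w), g w :=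
            Finset.add_sum_erase _ g humem
          have e2g : g u' + ∑ w ∈ ((Finset.univ.filter (fun w => G.Adj v w)).erase u).erase u', g w
              = ∑ w ∈ (Finset.univ.filter (fun w => G.Adj v w)).erase u, g w :=
            Finset.add_sum_erase _ g hu'mem
          have e3 : ∑ w ∈ ((Finset.univ.filter (fun w => G.Adj v w)).erase u).erase u', g w
              = ∑ w ∈ ((Finset.univ.filter (fun w => G.Adj v w)).erase u).erase u', f w := by
            refine Finset.sum_congr rfl ?_
            intro w hw
            simp only [Finset.mem_erase] at hw
            exact hgo w hw.2.1 hw.1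
          rw [hgu] at e1g
          rw [hgu'] at e2g
          omega
        · -- neither u nor u' neighbors v
          have h4 : ¬ G.Adj v u := by
            intro h
            exact h3 ((hnb v h2 h1).mp h.symm).symm
          have : ∑ w ∈ Finset.univ.filter (fun w => G.Adj v w), g w
              = ∑ w ∈ Finset.univ.filter (fun w => G.Adj v w), f w := by
            refine Finset.sum_congr rfl ?_
            intro w hw
            simp only [Finset.mem_filter] at hw
            have hwu : w ≠ u := fun h => h4 (h ▸ hw.2)
            have hwu' : w ≠ u' := fun h => h3 (h ▸ hw.2)
            exact hgo w hwu hwu'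
          omega
  -- weight comparison
  have humem : u ∈ (Finset.univ : Finset V) := Finset.mem_univ u
  have hu'mem : u' ∈ (Finset.univ : Finset V).erase u := by
    simp [Ne.symm hne]
  have e1 : f u + ∑ w ∈ (Finset.univ : Finset V).erase u, f w = ∑ v, f v :=
    Finset.add_sum_erase _ f humem
  have e2 : f u' + ∑ w ∈ ((Finset.univ : Finset V).erase u).erase u', f w
      = ∑ w ∈ (Finset.univ : Finset V).erase u, f w :=
    Finset.add_sum_erase _ f hu'mem
  have e1g : g u + ∑ w ∈ (Finset.univ : Finset V).erase u, g w = ∑ v, g v :=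
    Finset.add_sum_erase _ g humem
  have e2g : g u' + ∑ w ∈ ((Finset.univ : Finset V).erase u).erase u', g w
      = ∑ w ∈ (Finset.univ : Finset V).erase u, g w :=
    Finset.add_sum_erase _ g hu'mem
  have e3 : ∑ w ∈ ((Finset.univ : Finset V).erase u).erase u', g w
      = ∑ w ∈ ((Finset.univ : Finset V).erase u).erase u', f w := by
    refine Finset.sum_congr rfl ?_
    intro w hw
    simp only [Finset.mem_erase] at hw
    exact hgo w hw.2.1 hw.1
  rw [hgu] at e1g
  rw [hgu'] at e2g
  have hle : ∑ v, g v ≤ ∑ v, f v := by omega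
  have hgeS : italianDomNumber G ≤ ∑ v, g v :=
    Nat.sInf_le ⟨g, hgIt, rfl⟩
  have : ∑ v, g v = italianDomNumber G := le_antisymm (hsum' ▸ hle) hgeS
  exact ⟨g, hgIt, this, hgu'⟩
end

section
/- Let G be a graph, u ∈ V(G), and let H be the graph obtained from G by adding a new vertex u′ that is a true twin of u (adjacent to u and to all neighbors of u). Then γ_I(H) = γ_I(G) or γ_I(H) = γ_I(G) + 1. -/
open SimpleGraph Finset
open scoped Classical

/-- The graph obtained from `G` by adding a new vertex (the `none` vertex) which is a
true twin of `u`: adjacent to `u` and to all neighbors of `u`. -/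
def addTrueTwin {V : Type*} (G : SimpleGraph V) (u : V) : SimpleGraph (Option V) :=
  SimpleGraph.fromRel (fun a b =>
    match a, b with
    | some x, some y => G.Adj x y
    | some x, none => x = u ∨ G.Adj u x
    | none, some y => y = u ∨ G.Adj u y
    | none, none => False)

section Aux
set_option linter.unusedSectionVars false

variable {V : Type*} [Fintype V] (G : SimpleGraph V) (u : V)

lemma twin_adj_some_some (v w : V) :
    (addTrueTwin G u).Adj (some v) (some w) ↔ G.Adj v w := by
  simp only [addTrueTwin, SimpleGraph.fromRel_adj]
  constructor
  · rintro ⟨-, h | h⟩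
    · exact h
    · exact h.symm
  · intro h
    exact ⟨by simp [h.ne], Or.inl h⟩

lemma twin_adj_some_none (v : V) :
    (addTrueTwin G u).Adj (some v) none ↔ (v = u ∨ G.Adj u v) := by
  simp [addTrueTwin, SimpleGraph.fromRel_adj]

lemma twin_adj_none_some (v : V) :
    (addTrueTwin G u).Adj none (some v) ↔ (v = u ∨ G.Adj u v) := by
  simp [addTrueTwin, SimpleGraph.fromRel_adj]

lemma twin_adj_none_none : ¬ (addTrueTwin G u).Adj none none := by
  simp [addTrueTwin, SimpleGraph.fromRel_adj]

lemma twin_sum_some (g : Option V → ℕ) (v : V) :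
    ∑ x ∈ Finset.univ.filter (fun w => (addTrueTwin G u).Adj (some v) w), g x =
      (if v = u ∨ G.Adj u v then g none else 0) +
        ∑ w ∈ Finset.univ.filter (fun w => G.Adj v w), g (some w) := by
  rw [Finset.sum_filter, Finset.sum_filter, Fintype.sum_option]
  simp only [twin_adj_some_some, twin_adj_some_none]

lemma twin_sum_none (g : Option V → ℕ) :
    ∑ x ∈ Finset.univ.filter (fun w => (addTrueTwin G u).Adj none w), g x =
      ∑ w ∈ Finset.univ.filter (fun w => w = u ∨ G.Adj u w), g (some w) := by
  rw [Finset.sum_filter, Finset.sum_filter, Fintype.sum_option]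
  simp only [twin_adj_none_some, twin_adj_none_none, if_false, if_neg, zero_add]

lemma italian_nonempty (G : SimpleGraph V) :
    {w | ∃ f : V → ℕ, IsItalian G f ∧ ∑ v, f v = w}.Nonempty := by
  exact ⟨_, (fun _ => 2), ⟨fun _ => le_refl 2, fun v h => by simp at h⟩, rfl⟩

end Aux

theorem italian_addTrueTwin {V : Type*} [Fintype V] (G : SimpleGraph V) (u : V) :
    italianDomNumber (addTrueTwin G u) = italianDomNumber G ∨
      italianDomNumber (addTrueTwin G u) = italianDomNumber G + 1 := by
  have hH := Nat.sInf_mem (italian_nonempty (addTrueTwin G u))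
  obtain ⟨g, hg, hwg'⟩ := hH
  have hG := Nat.sInf_mem (italian_nonempty G)
  obtain ⟨f0, hf0, hwf0'⟩ := hG
  have hwg : ∑ x, g x = italianDomNumber (addTrueTwin G u) := hwg'
  have hwf0 : ∑ v, f0 v = italianDomNumber G := hwf0'
  clear hwg' hwf0'
  -- lower bound : γ_G ≤ γ_H
  have hlow : italianDomNumber G ≤ italianDomNumber (addTrueTwin G u) := by
    set f : V → ℕ := fun v => if v = u then min 2 (g (some u) + g none) else g (some v)
      with hf
    have hfit : IsItalian G f := by
      constructor
      · intro v
        by_cases h : v = u <;> simp [hf, h, hg.1 (some v)]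
      · intro v hv
        by_cases h : v = u
        · subst h
          have h0 : g (some v) = 0 ∧ g none = 0 := by
            have := hv
            simp only [hf, if_pos rfl] at this
            omega
          have := hg.2 (some v) h0.1
          rw [twin_sum_some] at this
          simp [h0.2] at this
          refine le_trans this (le_of_eq ?_)
          apply Finset.sum_congr rfl
          intro w hw
          simp only [Finset.mem_filter] at hw
          have : w ≠ v := fun e => (G.irrefl (e ▸ hw.2))
          simp [hf, this]
        · have hv' : g (some v) = 0 := by simpa [hf, h] using hv
          have := hg.2 (some v) hv'
          rw [twin_sum_some] at this
          by_cases hadj : v = u ∨ G.Adj u v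
          · -- neighbors of v in G include u iff G.Adj v u; careful
            rcases hadj with rfl | hadj
            · exact absurd rfl h
            · -- u ∈ N_G(v)
              have hu_mem : u ∈ Finset.univ.filter (fun w => G.Adj v w) := by
                simp [hadj.symm]
              rw [if_pos (Or.inr hadj)] at this
              rw [← Finset.sum_erase_add _ _ hu_mem] at this ⊢
              have heq : ∑ w ∈ (Finset.univ.filter (fun w => G.Adj v w)).erase u, f w
                  = ∑ w ∈ (Finset.univ.filter (fun w => G.Adj v w)).erase u, g (some w) := by
                apply Finset.sum_congr rfl
                intro w hw
                have : w ≠ u := (Finset.mem_erase.mp hw).1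
                simp [hf, this]
              rw [heq]
              simp only [hf, if_pos rfl]
              omega
          · rw [if_neg hadj] at this
            simp only [zero_add] at this
            refine le_trans this (le_of_eq ?_)
            apply Finset.sum_congr rfl
            intro w hw
            simp only [Finset.mem_filter] at hw
            have : w ≠ u := by
              rintro rfl
              exact hadj (Or.inr hw.2.symm)
            simp [hf, this]
    have hsum : ∑ v, f v ≤ ∑ x, g x := by
      rw [Fintype.sum_option]
      have hu_mem : u ∈ (Finset.univ : Finset V) := Finset.mem_univ u
      rw [← Finset.sum_erase_add _ f hu_mem, ← Finset.sum_erase_add _ (fun v => g (some v)) hu_mem]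
      have heq : ∑ v ∈ Finset.univ.erase u, f v = ∑ v ∈ Finset.univ.erase u, g (some v) := by
        apply Finset.sum_congr rfl
        intro w hw
        simp [hf, (Finset.mem_erase.mp hw).1]
      rw [heq]
      simp only [hf, if_pos rfl]
      omega
    calc italianDomNumber G ≤ ∑ v, f v := Nat.sInf_le ⟨f, hfit, rfl⟩
      _ ≤ ∑ x, g x := hsum
      _ = italianDomNumber (addTrueTwin G u) := hwg
  -- upper bound : γ_H ≤ γ_G + 1
  have hup : italianDomNumber (addTrueTwin G u) ≤ italianDomNumber G + 1 := by
    set g1 : Option V → ℕ := fun x => x.elim 1 f0 with hg1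
    have hgit : IsItalian (addTrueTwin G u) g1 := by
      constructor
      · rintro (_ | v)
        · simp [hg1]
        · simpa [hg1] using hf0.1 v
      · rintro (_ | v) hv
        · simp [hg1] at hv
        · have hv' : f0 v = 0 := by simpa [hg1] using hv
          have := hf0.2 v hv'
          rw [twin_sum_some]
          simp only [hg1, Option.elim]
          omega
    have : ∑ x, g1 x = italianDomNumber G + 1 := by
      rw [Fintype.sum_option]
      simp [hg1, hwf0]
      omega
    exact Nat.sInf_le ⟨g1, hgit, this⟩
  omega
end

section
/- Let u and u′ be false twins in a graph G (i.e., u and u′ are non-adjacent and N(u) = N(u′)). Then there exists a minimum-weight Italian dominating function f of G with f(u′) ≠ 2. -/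
open SimpleGraph Finset
open scoped Classical

theorem false_twin_idf {V : Type*} [Fintype V] (G : SimpleGraph V) (u u' : V)
    (hne : u ≠ u') (htwin : G.neighborSet u = G.neighborSet u') :
    ∃ f : V → ℕ, IsItalian G f ∧ (∑ v, f v) = italianDomNumber G ∧ f u' ≠ 2 := by

  have hγ : italianDomNumber G ∈ {w | ∃ f : V → ℕ, IsItalian G f ∧ ∑ v, f v = w} := by
    apply Nat.sInf_mem
    exact ⟨∑ v : V, 1, fun _ => 1, ⟨fun v => one_le_two, fun v h => absurd h one_ne_zero⟩, rfl⟩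
  obtain ⟨f, hf, hsum⟩ := hγ
  by_cases h2 : f u' = 2
  · -- modify f
    have hadj : ∀ v, G.Adj v u' → G.Adj v u := by
      intro v hv
      have : v ∈ G.neighborSet u' := hv.symm
      rw [← htwin] at this
      exact this.symm
    set g : V → ℕ := fun v => if v = u' then 1 else if v = u then min 2 (f u + 1) else f v
      with hgdef
    have hgu' : g u' = 1 := by simp [hgdef]
    have hgu : g u = min 2 (f u + 1) := by simp [hgdef, hne]
    have hgother : ∀ v, v ≠ u' → v ≠ u → g v = f v := by
      intro v h1 h3; simp [hgdef, h1, h3]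
    have hgu1 : 1 ≤ g u := by
      rw [hgu]; exact le_min one_le_two (Nat.succ_le_succ (Nat.zero_le _))
    have hguf : f u ≤ g u := by
      rw [hgu]; exact le_min (hf.1 u) (Nat.le_succ _)
    have hgIt : IsItalian G g := by
      constructor
      · intro v
        by_cases h1 : v = u'
        · simp [h1, hgu']
        by_cases h3 : v = u
        · rw [h3, hgu]; exact min_le_left _ _
        · rw [hgother v h1 h3]; exact hf.1 v
      · intro v hv
        have hvne' : v ≠ u' := by rintro rfl; rw [hgu'] at hv; omega
        have hvne : v ≠ u := by rintro rfl; omega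
        have hfv : f v = 0 := by rwa [hgother v hvne' hvne] at hv
        by_cases hmem : u' ∈ Finset.univ.filter (fun w => G.Adj v w)
        · have hadj1 : G.Adj v u' := (Finset.mem_filter.mp hmem).2
          have hmemu : u ∈ Finset.univ.filter (fun w => G.Adj v w) := by
            simp [hadj v hadj1]
          have hsub : ({u, u'} : Finset V) ⊆ Finset.univ.filter (fun w => G.Adj v w) := by
            intro x hx
            rcases Finset.mem_insert.mp hx with h | h
            · rwa [h]
            · rw [Finset.mem_singleton.mp h]; exact hmem
          calc (2 : ℕ) ≤ g u + g u' := by rw [hgu']; omega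
            _ = ∑ w ∈ ({u, u'} : Finset V), g w := (Finset.sum_pair hne).symm
            _ ≤ _ := Finset.sum_le_sum_of_subset hsub
        · have : ∑ w ∈ Finset.univ.filter (fun w => G.Adj v w), f w
              ≤ ∑ w ∈ Finset.univ.filter (fun w => G.Adj v w), g w := by
            apply Finset.sum_le_sum
            intro w hw
            have hwne' : w ≠ u' := by rintro rfl; exact hmem hw
            by_cases hwu : w = u
            · rw [hwu]; exact hguf
            · rw [hgother w hwne' hwu]
          exact le_trans (hf.2 v hfv) this
    -- weight computation
    have key : ∀ h : V → ℕ, ∑ v, h v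
        = h u' + h u + ∑ v ∈ (Finset.univ.erase u').erase u, h v := by
      intro h
      rw [← Finset.add_sum_erase _ h (Finset.mem_univ u'),
        ← Finset.add_sum_erase _ h (Finset.mem_erase.mpr ⟨hne, Finset.mem_univ u⟩)]
      ring
    have hrest : ∑ v ∈ (Finset.univ.erase u').erase u, g v
        = ∑ v ∈ (Finset.univ.erase u').erase u, f v := by
      apply Finset.sum_congr rfl
      intro x hx
      have h1 := Finset.mem_erase.mp hx
      have h3 := Finset.mem_erase.mp h1.2
      exact hgother x h3.1 h1.1
    have hwle : ∑ v, g v ≤ ∑ v, f v := by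
      rw [key g, key f, hrest, hgu', h2, hgu]
      omega
    have hge : italianDomNumber G ≤ ∑ v, g v := Nat.sInf_le ⟨g, hgIt, rfl⟩
    exact ⟨g, hgIt, le_antisymm (hsum ▸ hwle) hge, by rw [hgu']; omega⟩
  · exact ⟨f, hf, hsum, h2⟩
end

section
/- For the path P_n on n ≥ 1 vertices, γ_I(P_n) = ⌈(n+1)/2⌉. -/
open SimpleGraph Finset
open scoped Classical

section ItalianPathAux

open SimpleGraph Finset

variable {n : ℕ}

private lemma sum_even_ind (n : ℕ) :
    ∑ i ∈ Finset.range n, (if i % 2 = 0 then 1 else 0) = (n + 1) / 2 := by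
  induction n with
  | zero => simp
  | succ n ih =>
    rw [Finset.sum_range_succ, ih]
    by_cases h : n % 2 = 0 <;> simp [h] <;> omega

private lemma nbhd_double_count (f : Fin n → ℕ) :
    ∑ v : Fin n, ∑ u ∈ Finset.univ.filter (fun w => (pathGraph n).Adj v w), f u
      = ∑ u : Fin n, f u * (Finset.univ.filter (fun w => (pathGraph n).Adj u w)).card := by
  simp_rw [Finset.sum_filter]
  rw [Finset.sum_comm]
  apply Finset.sum_congr rfl
  intro u _
  have h : ∀ v : Fin n, (pathGraph n).Adj v u ↔ (pathGraph n).Adj u v := by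
    intro v; exact adj_comm _ _ _
  calc ∑ v : Fin n, (if (pathGraph n).Adj v u then f u else 0)
      = ∑ v ∈ Finset.univ.filter (fun v => (pathGraph n).Adj u v), f u := by
        rw [Finset.sum_filter]; apply Finset.sum_congr rfl; intro v _; simp [h v]
    _ = _ := by rw [Finset.sum_const, smul_eq_mul, Nat.mul_comm]

private lemma deg_le_two (u : Fin n) :
    (Finset.univ.filter (fun w => (pathGraph n).Adj u w)).card ≤ 2 := by
  have h2 : (Finset.univ : Finset Bool).card = 2 := by simp
  rw [← h2]
  apply Finset.card_le_card_of_injOn (fun v => decide (u.val + 1 = v.val))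
  · intro a _; exact Finset.mem_coe.mpr (Finset.mem_univ _)
  · intro a ha b hb hab
    simp only [Finset.coe_filter, Set.mem_setOf_eq, Finset.mem_univ, true_and,
      pathGraph_adj] at ha hb
    apply Fin.ext
    by_cases h1 : u.val + 1 = a.val <;> by_cases hb1 : u.val + 1 = b.val <;>
      simp [h1, hb1] at hab ⊢ <;> omega

private lemma deg_first_le_one (hn : 0 < n) :
    (Finset.univ.filter (fun w => (pathGraph n).Adj (⟨0, hn⟩ : Fin n) w)).card ≤ 1 := by
  rw [Finset.card_le_one]
  intro a ha b hb
  simp only [Finset.mem_filter, Finset.mem_univ, true_and, pathGraph_adj] at ha hb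
  have h0 : (⟨0, hn⟩ : Fin n).val = 0 := rfl

  apply Fin.ext
  omega

private lemma deg_last_le_one (hn : 0 < n) :
    (Finset.univ.filter (fun w => (pathGraph n).Adj (⟨n - 1, by omega⟩ : Fin n) w)).card ≤ 1 := by
  rw [Finset.card_le_one]
  intro a ha b hb
  simp only [Finset.mem_filter, Finset.mem_univ, true_and, pathGraph_adj] at ha hb
  have h0 : (⟨n - 1, by omega⟩ : Fin n).val = n - 1 := rfl

  have := a.isLt
  have := b.isLt
  apply Fin.ext
  omega

private lemma italian_path_lower (n : ℕ) (hn : 1 ≤ n) (f : Fin n → ℕ)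
    (hf : IsItalian (SimpleGraph.pathGraph n) f) :
    n + 1 ≤ 2 * ∑ v, f v := by
  classical
  obtain ⟨hle, hdom⟩ := hf
  set W := ∑ v, f v with hW
  set Z := Finset.univ.filter (fun v : Fin n => f v = 0) with hZ
  set NZ := Finset.univ.filter (fun v : Fin n => ¬ f v = 0) with hNZ
  have hsplit : Z.card + NZ.card = n := by
    rw [hZ, hNZ, Finset.card_filter_add_card_filter_not]
    simp
  -- double counting: 2 * Z.card ≤ sum of f u * deg u
  have hdc : 2 * Z.card ≤ ∑ u : Fin n, f u * (Finset.univ.filter (fun w => (pathGraph n).Adj u w)).card := by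
    rw [← nbhd_double_count]
    calc 2 * Z.card = ∑ v ∈ Z, 2 := by rw [Finset.sum_const, smul_eq_mul, Nat.mul_comm]
      _ ≤ ∑ v ∈ Z, ∑ u ∈ Finset.univ.filter (fun w => (pathGraph n).Adj v w), f u := by
          apply Finset.sum_le_sum
          intro v hv
          exact hdom v (by simpa [hZ] using hv)
      _ ≤ _ := Finset.sum_le_sum_of_subset (Finset.subset_univ Z)
  have hNZW : NZ.card ≤ W := by
    calc NZ.card = ∑ v ∈ NZ, 1 := by simp
      _ ≤ ∑ v ∈ NZ, f v := by
          apply Finset.sum_le_sum; intro v hv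
          have : ¬ f v = 0 := by simpa [hNZ] using hv
          omega
      _ ≤ W := Finset.sum_le_sum_of_subset (Finset.subset_univ NZ)
  have hZW : Z.card ≤ W := by
    have h1 : ∑ u : Fin n, f u * (Finset.univ.filter (fun w => (pathGraph n).Adj u w)).card
        ≤ ∑ u : Fin n, f u * 2 := by
      apply Finset.sum_le_sum; intro u _
      exact Nat.mul_le_mul_left _ (deg_le_two u)
    have h2 : ∑ u : Fin n, f u * 2 = 2 * W := by
      rw [← Finset.sum_mul, Nat.mul_comm]
    omega
  rcases Nat.lt_or_ge n 2 with h2 | h2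
  · -- n = 1
    have hn1 : n = 1 := by omega
    set v0 : Fin n := ⟨0, by omega⟩ with hv0
    have h0 : f v0 ≠ 0 := by
      intro h
      have hd := hdom v0 h
      have hempty : Finset.univ.filter (fun w => (pathGraph n).Adj v0 w) = ∅ := by
        apply Finset.filter_false_of_mem
        intro x _
        rw [pathGraph_adj]
        have hx := x.isLt
        have hv : v0.val = 0 := rfl
        omega
      rw [hempty] at hd
      simp at hd
    have hWv : W = f v0 := by
      rw [hW]
      refine Finset.sum_eq_single_of_mem _ (Finset.mem_univ _) ?_
      intro b _ hb
      exfalso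
      apply hb
      apply Fin.ext
      have := b.isLt
      have hv : v0.val = 0 := rfl
      omega
    omega
  · -- n ≥ 2
    set e0 : Fin n := ⟨0, by omega⟩ with he0
    set eN : Fin n := ⟨n - 1, by omega⟩ with heN
    have he0v : e0.val = 0 := rfl
    have heNv : eN.val = n - 1 := rfl
    have hne : e0 ≠ eN := by
      intro h
      have := congrArg Fin.val h
      rw [he0v, heNv] at this
      omega
    -- helper: if some vertex has value 2 then W ≥ NZ.card + 1
    have endpoint_case : ∀ v1 : Fin n, f v1 = 2 → NZ.card + 1 ≤ W := by
      intro v1 h1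
      have hv1 : v1 ∈ NZ := by simp [hNZ, h1]
      have hsum1 : ∑ v ∈ NZ, f v = f v1 + ∑ v ∈ NZ.erase v1, f v :=
        (Finset.add_sum_erase _ _ hv1).symm
      have herase : (NZ.erase v1).card = NZ.card - 1 := Finset.card_erase_of_mem hv1
      have h3 : (NZ.erase v1).card ≤ ∑ v ∈ NZ.erase v1, f v := by
        calc (NZ.erase v1).card = ∑ v ∈ NZ.erase v1, 1 := by simp
          _ ≤ _ := by
            apply Finset.sum_le_sum; intro v hv
            have : ¬ f v = 0 := by
              have := Finset.mem_of_mem_erase hv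
              simpa [hNZ] using this
            omega
      have h4 : ∑ v ∈ NZ, f v ≤ W := Finset.sum_le_sum_of_subset (Finset.subset_univ NZ)
      have h5 : 1 ≤ NZ.card := Finset.card_pos.mpr ⟨v1, hv1⟩
      omega
    by_cases h0 : f e0 = 0
    · -- f at vertex 1 must be 2
      have hv1 : f ⟨1, by omega⟩ = 2 := by
        have hd := hdom e0 h0
        have hsub : Finset.univ.filter (fun w => (pathGraph n).Adj e0 w)
            ⊆ {(⟨1, by omega⟩ : Fin n)} := by
          intro x hx
          simp only [Finset.mem_filter, Finset.mem_univ, true_and, pathGraph_adj] at hx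

          simp only [Finset.mem_singleton]
          apply Fin.ext
          have h1v : (⟨1, by omega⟩ : Fin n).val = 1 := rfl
          omega
        have hs := Finset.sum_le_sum_of_subset (f := f) hsub
        rw [Finset.sum_singleton] at hs
        have := hle ⟨1, by omega⟩
        omega
      have := endpoint_case _ hv1
      omega
    · by_cases hNend : f eN = 0
      · -- f at vertex n-2 must be 2
        have hv1 : f ⟨n - 2, by omega⟩ = 2 := by
          have hd := hdom eN hNend
          have hsub : Finset.univ.filter (fun w => (pathGraph n).Adj eN w)
              ⊆ {(⟨n - 2, by omega⟩ : Fin n)} := by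
            intro x hx
            simp only [Finset.mem_filter, Finset.mem_univ, true_and, pathGraph_adj] at hx

            simp only [Finset.mem_singleton]
            apply Fin.ext
            have h1v : (⟨n - 2, by omega⟩ : Fin n).val = n - 2 := rfl
            have := x.isLt
            omega
          have hs := Finset.sum_le_sum_of_subset (f := f) hsub
          rw [Finset.sum_singleton] at hs
          have := hle ⟨n - 2, by omega⟩
          omega
        have := endpoint_case _ hv1
        omega
      · -- both endpoints positive: improved degree bound
        have key : ∑ u : Fin n,
            (f u * (Finset.univ.filter (fun w => (pathGraph n).Adj u w)).card
              + (if u = e0 then f u else 0) + (if u = eN then f u else 0))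
            ≤ ∑ u : Fin n, 2 * f u := by
          apply Finset.sum_le_sum
          intro u _
          by_cases hu0 : u = e0
          · rw [hu0, if_pos rfl, if_neg hne]
            have hd : (Finset.univ.filter (fun w => (pathGraph n).Adj e0 w)).card ≤ 1 :=
              deg_first_le_one (by omega)
            have := Nat.mul_le_mul_left (f e0) hd
            omega
          · by_cases huN : u = eN
            · rw [huN, if_neg (fun h => hne h.symm), if_pos rfl]
              have hd : (Finset.univ.filter (fun w => (pathGraph n).Adj eN w)).card ≤ 1 :=
                deg_last_le_one (by omega)
              have := Nat.mul_le_mul_left (f eN) hd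
              omega
            · rw [if_neg hu0, if_neg huN]
              have := Nat.mul_le_mul_left (f u) (deg_le_two u)
              omega
        rw [Finset.sum_add_distrib, Finset.sum_add_distrib,
          Finset.sum_ite_eq' Finset.univ e0 f, Finset.sum_ite_eq' Finset.univ eN f,
          if_pos (Finset.mem_univ e0), if_pos (Finset.mem_univ eN)] at key
        have h2W : ∑ u : Fin n, 2 * f u = 2 * W := by rw [← Finset.mul_sum]
        rw [h2W] at key
        omega

end ItalianPathAux
section ItalianPathUpper

open SimpleGraph Finset

private lemma italian_path_upper (n : ℕ) (hn : 1 ≤ n) :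
    ∃ f : Fin n → ℕ, IsItalian (SimpleGraph.pathGraph n) f ∧ ∑ v, f v = (n + 2) / 2 := by
  classical
  refine ⟨fun i => (if i.val % 2 = 0 then 1 else 0) + (if n % 2 = 0 ∧ i.val = n - 1 then 1 else 0),
    ⟨?_, ?_⟩, ?_⟩
  · intro v
    show (if v.val % 2 = 0 then 1 else 0) + (if n % 2 = 0 ∧ v.val = n - 1 then 1 else 0) ≤ 2
    have a1 : (if v.val % 2 = 0 then 1 else 0) ≤ 1 := by split <;> omega
    have a2 : (if n % 2 = 0 ∧ v.val = n - 1 then 1 else 0) ≤ 1 := by split <;> omega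
    omega
  · intro v hv
    replace hv : (if v.val % 2 = 0 then 1 else 0) + (if n % 2 = 0 ∧ v.val = n - 1 then 1 else 0) = 0 := hv
    have h1 : ¬ v.val % 2 = 0 := by
      intro h; rw [if_pos h] at hv; omega
    have h2 : ¬ (n % 2 = 0 ∧ v.val = n - 1) := by
      intro h; rw [if_pos h] at hv; omega
    have hlt := v.isLt
    have hv1 : v.val + 1 < n := by
      rcases Nat.lt_or_ge (v.val + 1) n with h | h
      · exact h
      · exfalso
        have hveq : v.val = n - 1 := by omega
        exact h2 ⟨by omega, hveq⟩
    have hodd : 1 ≤ v.val := by omega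
    set a : Fin n := ⟨v.val - 1, by omega⟩ with ha
    set b : Fin n := ⟨v.val + 1, hv1⟩ with hb
    have hav : a.val = v.val - 1 := rfl
    have hbv : b.val = v.val + 1 := rfl
    have hab : a ≠ b := by
      intro h
      have := congrArg Fin.val h
      rw [hav, hbv] at this
      omega
    have hadja : (pathGraph n).Adj v a := by
      rw [pathGraph_adj]; right; rw [hav]; omega
    have hadjb : (pathGraph n).Adj v b := by
      rw [pathGraph_adj]; left; rw [hbv]
    have hsub : ({a, b} : Finset (Fin n)) ⊆
        Finset.univ.filter (fun w => (pathGraph n).Adj v w) := by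
      intro x hx
      simp only [Finset.mem_insert, Finset.mem_singleton] at hx
      rcases hx with rfl | rfl <;> simp [hadja, hadjb]
    have hsum := Finset.sum_le_sum_of_subset
      (f := fun i : Fin n => (if i.val % 2 = 0 then 1 else 0)
        + (if n % 2 = 0 ∧ i.val = n - 1 then 1 else 0)) hsub
    rw [Finset.sum_pair hab] at hsum
    replace hsum : ((if a.val % 2 = 0 then 1 else 0) + (if n % 2 = 0 ∧ a.val = n - 1 then 1 else 0))
        + ((if b.val % 2 = 0 then 1 else 0) + (if n % 2 = 0 ∧ b.val = n - 1 then 1 else 0))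
        ≤ ∑ u ∈ Finset.univ.filter (fun w => (pathGraph n).Adj v w),
            ((if u.val % 2 = 0 then 1 else 0) + (if n % 2 = 0 ∧ u.val = n - 1 then 1 else 0)) := hsum
    have hae : a.val % 2 = 0 := by rw [hav]; omega
    have hbe : b.val % 2 = 0 := by rw [hbv]; omega
    refine le_trans ?_ hsum
    rw [if_pos hae, if_pos hbe]
    omega
  · rw [Finset.sum_add_distrib]
    have h1 : ∑ v : Fin n, (if v.val % 2 = 0 then 1 else 0) = (n + 1) / 2 := by
      rw [Fin.sum_univ_eq_sum_range (fun i => if i % 2 = 0 then 1 else 0)]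
      exact sum_even_ind n
    have h2 : ∑ v : Fin n, (if n % 2 = 0 ∧ v.val = n - 1 then 1 else 0)
        = if n % 2 = 0 then 1 else 0 := by
      by_cases hpar : n % 2 = 0
      · rw [if_pos hpar]
        rw [Finset.sum_eq_single_of_mem (⟨n - 1, by omega⟩ : Fin n) (Finset.mem_univ _)]
        · have hv : (⟨n - 1, by omega⟩ : Fin n).val = n - 1 := rfl
          rw [if_pos ⟨hpar, hv⟩]
        · intro b _ hb
          have hbv : ¬ b.val = n - 1 := by
            intro h
            exact hb (Fin.ext h)
          rw [if_neg (fun hc => hbv hc.2)]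
      · rw [if_neg hpar]
        have : ∀ v : Fin n, (if n % 2 = 0 ∧ v.val = n - 1 then 1 else 0) = 0 := by
          intro v; rw [if_neg (fun hc => hpar hc.1)]
        rw [Finset.sum_congr rfl (fun v _ => this v), Finset.sum_const_zero]
    rw [h1, h2]
    by_cases hpar : n % 2 = 0 <;> [rw [if_pos hpar]; rw [if_neg hpar]] <;> omega

end ItalianPathUpper
theorem italian_path (n : ℕ) (hn : 1 ≤ n) :
    italianDomNumber (SimpleGraph.pathGraph n) = (n + 2) / 2 := by
  obtain ⟨f, hf, hsum⟩ := italian_path_upper n hn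
  have hmem : (n + 2) / 2 ∈
      {w | ∃ f : Fin n → ℕ, IsItalian (SimpleGraph.pathGraph n) f ∧ ∑ v, f v = w} :=
    ⟨f, hf, hsum⟩
  unfold italianDomNumber
  apply le_antisymm
  · exact Nat.sInf_le hmem
  · apply le_csInf ⟨(n + 2) / 2, hmem⟩
    rintro w ⟨g, hg, rfl⟩
    have := italian_path_lower n hn g hg
    omega
end
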